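/- Let matrices satisfy σ·M + M*·σ + N*N = 0 and α*σ + R₀*N = 0 with σ Hermitian positive definite, where M = Λ_k+α_kβ_k, N = H_k+R₀β_k, α = α_k, and R₀*R₀ = I. Then the function K(z) = R₀ + N(zI−M)^{-1}α satisfies K*(z)K(z) = I identically, where K*(z) = (K(−z̄))*. -/
import Mathlib


open Matrix

noncomputable section

/-- Map a complex matrix entrywise to rational functions. -/
def mc {a b : ℕ} (M : Matrix (Fin a) (Fin b) ℂ) : Matrix (Fin a) (Fin b) (RatFunc ℂ) :=
  M.map (⇑(RatFunc.C : ℂ →+* RatFunc ℂ))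

/-- The resolvent `(z I − M)⁻¹` as a matrix of rational functions. -/
def res {a : ℕ} (M : Matrix (Fin a) (Fin a) ℂ) : Matrix (Fin a) (Fin a) (RatFunc ℂ) :=
  ((Matrix.scalar (Fin a) (RatFunc.X : RatFunc ℂ)) - mc M)⁻¹

/-- The "anti-resolvent" `(z I + M)⁻¹`, used for para-hermitian conjugates. -/
def resneg {a : ℕ} (M : Matrix (Fin a) (Fin a) ℂ) : Matrix (Fin a) (Fin a) (RatFunc ℂ) :=
  ((Matrix.scalar (Fin a) (RatFunc.X : RatFunc ℂ)) + mc M)⁻¹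

/-- Observability of a pair `(C, A)`. -/
def Observable {p n : ℕ} (C : Matrix (Fin p) (Fin n) ℂ) (A : Matrix (Fin n) (Fin n) ℂ) : Prop :=
  ∀ v : Fin n → ℂ, (∀ k : ℕ, C *ᵥ ((A ^ k) *ᵥ v) = 0) → v = 0

/-- Controllability of a pair `(Λ, G)`. -/
def Controllable {r m : ℕ} (L : Matrix (Fin r) (Fin r) ℂ) (G : Matrix (Fin r) (Fin m) ℂ) : Prop :=
  ∀ y : Fin r → ℂ, (∀ k : ℕ, y ᵥ* ((L ^ k) * G) = 0) → y = 0

/-- The range (column space) of a matrix, as a submodule of `ℂⁿ`. -/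
def mrange {a b : ℕ} (M : Matrix (Fin a) (Fin b) ℂ) : Submodule ℂ (Fin a → ℂ) :=
  LinearMap.range M.mulVecLin

/-- The set of states reachable from the origin by a finite input sequence
producing identically zero output along the way (the minimal input-containing
subspace `C*(Σ)`). -/
def OutNullReach {n p q : ℕ} (A : Matrix (Fin n) (Fin n) ℂ) (B : Matrix (Fin n) (Fin q) ℂ)
    (C : Matrix (Fin p) (Fin n) ℂ) (D : Matrix (Fin p) (Fin q) ℂ) (x : Fin n → ℂ) : Prop :=
  ∃ (j : ℕ) (ξ : ℕ → (Fin n → ℂ)) (u : ℕ → (Fin q → ℂ)),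
    ξ 0 = 0 ∧ (∀ i < j, ξ (i + 1) = A *ᵥ ξ i + B *ᵥ u i ∧ C *ᵥ ξ i + D *ᵥ u i = 0) ∧ ξ j = x

/-- Positive definiteness for Hermitian complex matrices. -/
def PosDefC {r : ℕ} (σ : Matrix (Fin r) (Fin r) ℂ) : Prop :=
  σ.IsHermitian ∧ ∀ v : Fin r → ℂ, v ≠ 0 → 0 < (star v ⬝ᵥ (σ *ᵥ v)).re

lemma mc_mul {a b c : ℕ} (P : Matrix (Fin a) (Fin b) ℂ) (Q : Matrix (Fin b) (Fin c) ℂ) :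
    mc (P * Q) = mc P * mc Q := Matrix.map_mul

lemma mc_add {a b : ℕ} (P Q : Matrix (Fin a) (Fin b) ℂ) : mc (P + Q) = mc P + mc Q := by
  simp [mc, Matrix.map_add]

lemma mc_neg {a b : ℕ} (P : Matrix (Fin a) (Fin b) ℂ) : mc (-P) = -mc P := by
  ext i j; simp [mc]

lemma mc_zero {a b : ℕ} : mc (0 : Matrix (Fin a) (Fin b) ℂ) = 0 := by
  ext i j; simp [mc]

lemma mc_one {a : ℕ} : mc (1 : Matrix (Fin a) (Fin a) ℂ) = 1 := by
  ext i j; simp [mc, Matrix.one_apply, apply_ite]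

lemma det_unit {r : ℕ} (M : Matrix (Fin r) (Fin r) ℂ) :
    IsUnit ((Matrix.scalar (Fin r) (RatFunc.X : RatFunc ℂ)) - mc M).det := by
  have h : (Matrix.scalar (Fin r) (RatFunc.X : RatFunc ℂ)) - mc M
      = (algebraMap (Polynomial ℂ) (RatFunc ℂ)).mapMatrix (charmatrix M) := by
    ext i j
    rw [RingHom.mapMatrix_apply, Matrix.map_apply, charmatrix_apply]
    simp [mc, Matrix.scalar_apply, Matrix.diagonal_apply, apply_ite,
      RatFunc.algebraMap_C, RatFunc.algebraMap_X]
  rw [h, ← RingHom.map_det]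
  rw [isUnit_iff_ne_zero]
  exact (map_ne_zero_iff _ (RatFunc.algebraMap_injective ℂ)).mpr (M.charpoly_monic.ne_zero)

lemma scalar_comm {r : ℕ} (P : Matrix (Fin r) (Fin r) (RatFunc ℂ)) :
    Matrix.scalar (Fin r) (RatFunc.X : RatFunc ℂ) * P = P * Matrix.scalar (Fin r) RatFunc.X :=
  (Matrix.scalar_commute _ (fun _ => Commute.all _ _) P).eq

set_option maxHeartbeats 1600000 in
/-- the algebraic core of the inner-function construction:
`σM + M*σ + N*N = 0`, `α*σ + R₀*N = 0`, `R₀*R₀ = I` (σ Hermitian positive definite)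
imply `K*(z)K(z) = I` for `K(z) = R₀ + N(zI−M)⁻¹α`. -/
theorem stmt13 {r q m : ℕ}
    (M : Matrix (Fin r) (Fin r) ℂ) (N : Matrix (Fin q) (Fin r) ℂ)
    (α : Matrix (Fin r) (Fin m) ℂ) (R₀ : Matrix (Fin q) (Fin m) ℂ)
    (σ : Matrix (Fin r) (Fin r) ℂ)
    (hσ : PosDefC σ)
    (h1 : σ * M + Mᴴ * σ + Nᴴ * N = 0)
    (h2 : αᴴ * σ + R₀ᴴ * N = 0)
    (hR : R₀ᴴ * R₀ = 1) :
    (mc R₀ᴴ - mc αᴴ * resneg Mᴴ * mc Nᴴ) * (mc R₀ + mc N * res M * mc α) = 1 := by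
  set A : Matrix (Fin r) (Fin r) (RatFunc ℂ) :=
    (Matrix.scalar (Fin r) (RatFunc.X : RatFunc ℂ)) - mc M with hAdef
  set B : Matrix (Fin r) (Fin r) (RatFunc ℂ) :=
    (Matrix.scalar (Fin r) (RatFunc.X : RatFunc ℂ)) + mc Mᴴ with hBdef
  have hresM : res M = A⁻¹ := rfl
  have hresB : resneg Mᴴ = B⁻¹ := rfl
  have hAdet : IsUnit A.det := det_unit M
  have hBdet : IsUnit B.det := by
    have : B = (Matrix.scalar (Fin r) (RatFunc.X : RatFunc ℂ)) - mc (-Mᴴ) := by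
      rw [mc_neg, sub_neg_eq_add]
    rw [this]; exact det_unit _
  have hA1 : A * A⁻¹ = 1 := Matrix.mul_nonsing_inv A hAdet
  have hA2 : A⁻¹ * A = 1 := Matrix.nonsing_inv_mul A hAdet
  have hB1 : B * B⁻¹ = 1 := Matrix.mul_nonsing_inv B hBdet
  have hB2 : B⁻¹ * B = 1 := Matrix.nonsing_inv_mul B hBdet
  -- key Lyapunov-type identity lifted to rational functions
  have hNN : Nᴴ * N = -(σ * M + Mᴴ * σ) := by
    rw [add_comm] at h1; exact eq_neg_of_add_eq_zero_left h1
  have key : mc Nᴴ * mc N = mc σ * A - B * mc σ := by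
    rw [← mc_mul, hNN, mc_neg, mc_add, mc_mul, mc_mul, hAdef, hBdef]
    rw [mul_sub, add_mul, ← scalar_comm (mc σ)]
    abel
  have key2 : B⁻¹ * (mc Nᴴ * mc N) * A⁻¹ = B⁻¹ * mc σ - mc σ * A⁻¹ := by
    have e1 : B⁻¹ * (mc σ * A) * A⁻¹ = B⁻¹ * mc σ := by
      rw [Matrix.mul_assoc, Matrix.mul_assoc, hA1, Matrix.mul_one]
    have e2 : B⁻¹ * (B * mc σ) * A⁻¹ = mc σ * A⁻¹ := by
      rw [← Matrix.mul_assoc, hB2, Matrix.one_mul]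
    rw [key, mul_sub, sub_mul, e1, e2]
  have f2 : mc R₀ᴴ * mc N + mc αᴴ * mc σ = 0 := by
    rw [← mc_mul, ← mc_mul, ← mc_add, add_comm, h2, mc_zero]
  have h2' : Nᴴ * R₀ + σ * α = 0 := by
    have := congrArg Matrix.conjTranspose h2
    simpa [Matrix.conjTranspose_add, Matrix.conjTranspose_mul, hσ.1.eq, add_comm] using this
  have f3 : mc Nᴴ * mc R₀ + mc σ * mc α = 0 := by
    rw [← mc_mul, ← mc_mul, ← mc_add, h2', mc_zero]
  have f1 : mc R₀ᴴ * mc R₀ = 1 := by rw [← mc_mul, hR, mc_one]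
  rw [hresM, hresB]
  have expand : (mc R₀ᴴ - mc αᴴ * B⁻¹ * mc Nᴴ) * (mc R₀ + mc N * A⁻¹ * mc α)
      = mc R₀ᴴ * mc R₀ + (mc R₀ᴴ * mc N + mc αᴴ * mc σ) * (A⁻¹ * mc α)
        - (mc αᴴ * B⁻¹) * (mc Nᴴ * mc R₀ + mc σ * mc α)
        - mc αᴴ * (B⁻¹ * (mc Nᴴ * mc N) * A⁻¹ - (B⁻¹ * mc σ - mc σ * A⁻¹)) * mc α := by
    simp only [Matrix.sub_mul, Matrix.mul_sub, Matrix.add_mul, Matrix.mul_add,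
      Matrix.mul_assoc, Matrix.neg_mul, Matrix.mul_neg]
    abel
  rw [expand, f1, f2, f3, key2, sub_self]
  simp only [Matrix.zero_mul, Matrix.mul_zero, sub_zero, add_zero]
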